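/- Assume a(s)/s^k → a_∞ and f(s)/s^p → f_∞ as s → +∞ with k, a_∞, f_∞ > 0 and p > k + 1. Set F(t) = ∫_0^t f (with f ≥ 0, f > 0 on (0,∞)), and let g solve g' = 1/√(a∘g), g(0)=0. Then the limit L := lim_{u→+∞} √(F(g(u))) ∫_u^{+∞} [∫_0^t √(F(g(s))) ds] / F(g(t))^{3/2} dt satisfies: L = 0 if p > 2k + 3, and L = +∞ if k+1 < p < 2k + 3. -/

import Mathlib

/-!
Every quantity is squeezed between constant multiples of a power of the variable, i.e. is
`Θ(t ^ r)`, and such relations survive products, quotients, powers, composition and integration.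
Along `g` the function `g ^ ((k + 2) / 2)` has derivative `((k + 2) / 2) / √(a(g) / g ^ k)`,
which tends to a positive constant, so `g ≍ t ^ (2 / (k + 2))` and `F ∘ g ≍ t ^ β` with
`β = 2 (p + 1) / (k + 2) > 2`. Then `∫₀ᵗ √(F ∘ g) ≍ t ^ (β / 2 + 1)`, the integrand of the outer
integral is `≍ t ^ (1 - β)`, its tail from `u` is `≍ u ^ (2 - β)` and `Φ u ≍ u ^ (2 - β / 2)`,
whose exponent is negative exactly when `p > 2k + 3`.
-/

open Filter Topology MeasureTheory Set Asymptotics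

lemma isTheta_iff_eventually_bounds {α : Type*} {l : Filter α} {f g : α → ℝ}
    (hf : 0 ≤ᶠ[l] f) (hg : 0 ≤ᶠ[l] g) :
    f =Θ[l] g ↔ ∃ c₁ c₂ : ℝ, 0 < c₁ ∧ ∀ᶠ x in l, c₁ * g x ≤ f x ∧ f x ≤ c₂ * g x := by
  constructor
  · rintro ⟨hfg, hgf⟩
    obtain ⟨c₂, hc₂⟩ := isBigO_iff.1 hfg
    obtain ⟨c, hc, hc'⟩ := hgf.exists_pos
    refine ⟨c⁻¹, c₂, inv_pos.2 hc, ?_⟩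
    filter_upwards [hc₂, hc'.bound, hf, hg] with x h₂ h₁ hfx hgx
    rw [Real.norm_of_nonneg hfx, Real.norm_of_nonneg hgx] at h₁ h₂
    exact ⟨(inv_mul_le_iff₀ hc).2 h₁, h₂⟩
  · rintro ⟨c₁, c₂, hc₁, hb⟩
    refine ⟨IsBigO.of_bound c₂ ?_, IsBigO.of_bound c₁⁻¹ ?_⟩ <;>
      filter_upwards [hb, hf, hg] with x hx hfx hgx <;>
      rw [Real.norm_of_nonneg hfx, Real.norm_of_nonneg hgx]
    · exact hx.2
    · exact (le_inv_mul_iff₀ hc₁).2 hx.1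

lemma isLittleO_const_rpow_atTop (C : ℝ) {s : ℝ} (hs : 0 < s) :
    (fun _ : ℝ => C) =o[atTop] (· ^ s) :=
  isLittleO_const_left.2 <| Or.inr <| tendsto_norm_atTop_atTop.comp (tendsto_rpow_atTop hs)

lemma rpow_eventually_nonneg (r : ℝ) : 0 ≤ᶠ[atTop] (fun x : ℝ => x ^ r) :=
  (eventually_ge_atTop 0).mono fun _ hx => Real.rpow_nonneg hx r

lemma sub_le_sub_of_hasDerivAt_le {φ ψ φ' ψ' : ℝ → ℝ} {T : ℝ}
    (hφ : ∀ x ≥ T, HasDerivAt φ (φ' x) x) (hψ : ∀ x ≥ T, HasDerivAt ψ (ψ' x) x)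
    (hle : ∀ x ≥ T, φ' x ≤ ψ' x) {x : ℝ} (hx : T ≤ x) : φ x - φ T ≤ ψ x - ψ T := by
  have hmono : MonotoneOn (fun y => ψ y - φ y) (Ici T) := by
    refine monotoneOn_of_hasDerivWithinAt_nonneg (f' := fun y => ψ' y - φ' y) (convex_Ici T)
      (fun y hy => ((hψ y hy).sub (hφ y hy)).continuousAt.continuousWithinAt) ?_ ?_ <;>
      rw [interior_Ici] <;> intro y hy
    · exact ((hψ y hy.le).sub (hφ y hy.le)).hasDerivWithinAt
    · exact sub_nonneg.2 (hle y hy.le)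
  have := hmono (mem_Ici.2 le_rfl) hx hx
  simp only at this
  linarith

theorem isTheta_rpow_add_one_of_hasDerivAt {φ φ' : ℝ → ℝ} {r : ℝ} (hr : -1 < r)
    (hφ : ∀ᶠ x in atTop, HasDerivAt φ (φ' x) x) (h0 : 0 ≤ᶠ[atTop] φ')
    (hΘ : φ' =Θ[atTop] (· ^ r)) : φ =Θ[atTop] (· ^ (r + 1)) := by
  have hs : 0 < r + 1 := by linarith
  obtain ⟨c₁, c₂, hc₁, hb⟩ := (isTheta_iff_eventually_bounds h0 (rpow_eventually_nonneg r)).1 hΘ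
  obtain ⟨T, hT⟩ := eventually_atTop.1 (hb.and (hφ.and (eventually_gt_atTop 0)))
  have hprim : ∀ c, ∀ x ≥ T, HasDerivAt (fun y => c / (r + 1) * y ^ (r + 1)) (c * x ^ r) x := by
    intro c x hx
    refine ((Real.hasDerivAt_rpow_const (Or.inl (hT x hx).2.2.ne')).const_mul
      (c / (r + 1))).congr_deriv ?_
    rw [add_sub_cancel_right]
    field_simp
  have hlow : ∀ x ≥ T, c₁ / (r + 1) * (x ^ (r + 1) - T ^ (r + 1)) ≤ φ x - φ T := fun x hx => by
    have := sub_le_sub_of_hasDerivAt_le (hprim c₁) (fun y hy => (hT y hy).2.1)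
      (fun y hy => (hT y hy).1.1) hx
    linarith
  have hup : ∀ x ≥ T, φ x - φ T ≤ c₂ / (r + 1) * (x ^ (r + 1) - T ^ (r + 1)) := fun x hx => by
    have := sub_le_sub_of_hasDerivAt_le (fun y hy => (hT y hy).2.1) (hprim c₂)
      (fun y hy => (hT y hy).1.2) hx
    linarith
  have hgap : ∀ x ≥ T, 0 ≤ x ^ (r + 1) - T ^ (r + 1) := fun x hx =>
    sub_nonneg.2 (Real.rpow_le_rpow (hT T le_rfl).2.2.le hx hs.le)
  have hΔ : (fun x => φ x - φ T) =Θ[atTop] (fun x => x ^ (r + 1) - T ^ (r + 1)) := by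
    rw [isTheta_iff_eventually_bounds]
    · exact ⟨c₁ / (r + 1), c₂ / (r + 1), by positivity,
        (eventually_ge_atTop T).mono fun x hx => ⟨hlow x hx, hup x hx⟩⟩
    · exact (eventually_ge_atTop T).mono fun x hx =>
        (mul_nonneg (by positivity) (hgap x hx)).trans (hlow x hx)
    · exact (eventually_ge_atTop T).mono hgap
  have hshift : (fun x => x ^ (r + 1) - T ^ (r + 1)) =Θ[atTop] (· ^ (r + 1)) := by
    refine EventuallyEq.trans_isTheta (.of_eq ?_)
      ((isTheta_refl (· ^ (r + 1)) atTop).add_isLittleO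
        (isLittleO_const_rpow_atTop (-T ^ (r + 1)) hs))
    ext x
    simp [sub_eq_add_neg]
  refine EventuallyEq.trans_isTheta (.of_eq ?_)
    ((hΔ.trans hshift).add_isLittleO (isLittleO_const_rpow_atTop (φ T) hs))
  ext x
  simp

theorem isTheta_integral_Ici_rpow {h : ℝ → ℝ} {r : ℝ} (hr : r < -1) (hm : Measurable h)
    (h0 : 0 ≤ᶠ[atTop] h) (hΘ : h =Θ[atTop] (· ^ r)) :
    (fun u => ∫ t in Ici u, h t) =Θ[atTop] (· ^ (r + 1)) := by
  obtain ⟨c₁, c₂, hc₁, hb⟩ := (isTheta_iff_eventually_bounds h0 (rpow_eventually_nonneg r)).1 hΘ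
  obtain ⟨T, hT⟩ := eventually_atTop.1 (hb.and (h0.and (eventually_gt_atTop 0)))
  have hpow : ∀ u ≥ T, ∀ c, IntegrableOn (fun t => c * t ^ r) (Ici u) := fun u hu c =>
    ((integrableOn_Ici_iff_integrableOn_Ioi).2
      (integrableOn_Ioi_rpow_of_lt hr (hT u hu).2.2)).const_mul c
  have hpow_eq : ∀ u ≥ T, ∀ c, ∫ t in Ici u, c * t ^ r = -c / (r + 1) * u ^ (r + 1) := by
    intro u hu c
    rw [integral_const_mul, integral_Ici_eq_integral_Ioi,
      integral_Ioi_rpow_of_lt hr (hT u hu).2.2]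
    ring
  have hint : ∀ u ≥ T, IntegrableOn h (Ici u) := fun u hu =>
    (hpow u hu c₂).mono' hm.aestronglyMeasurable <|
      (ae_restrict_mem measurableSet_Ici).mono fun t ht => by
        rw [Real.norm_of_nonneg (hT t (hu.trans ht)).2.1]
        exact (hT t (hu.trans ht)).1.2
  have hr' : r + 1 < 0 := by linarith
  rw [isTheta_iff_eventually_bounds _ (rpow_eventually_nonneg _)]
  · refine ⟨-c₁ / (r + 1), -c₂ / (r + 1), div_pos_of_neg_of_neg (by linarith) hr',
      (eventually_ge_atTop T).mono fun u hu => ?_⟩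
    rw [← hpow_eq u hu, ← hpow_eq u hu]
    exact ⟨setIntegral_mono_on (hpow u hu c₁) (hint u hu) measurableSet_Ici
        fun t ht => (hT t (hu.trans ht)).1.1,
      setIntegral_mono_on (hint u hu) (hpow u hu c₂) measurableSet_Ici
        fun t ht => (hT t (hu.trans ht)).1.2⟩
  · exact (eventually_ge_atTop T).mono fun u hu =>
      setIntegral_nonneg measurableSet_Ici fun t ht => (hT t (hu.trans ht)).2.1

namespace Asymptotics.IsTheta

variable {f f₁ f₂ g : ℝ → ℝ} {r s : ℝ}

theorem mul_rpow (h₁ : f₁ =Θ[atTop] (· ^ r)) (h₂ : f₂ =Θ[atTop] (· ^ s)) :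
    (fun x => f₁ x * f₂ x) =Θ[atTop] (· ^ (r + s)) :=
  (h₁.mul h₂).trans_eventuallyEq <|
    (eventually_gt_atTop 0).mono fun _ hx => (Real.rpow_add hx r s).symm

theorem div_rpow (h₁ : f₁ =Θ[atTop] (· ^ r)) (h₂ : f₂ =Θ[atTop] (· ^ s)) :
    (fun x => f₁ x / f₂ x) =Θ[atTop] (· ^ (r - s)) :=
  (h₁.div h₂).trans_eventuallyEq <|
    (eventually_gt_atTop 0).mono fun _ hx => (Real.rpow_sub hx r s).symm

theorem rpow_rpow (h : f =Θ[atTop] (· ^ r)) (h0 : 0 ≤ᶠ[atTop] f) (c : ℝ) :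
    (fun x => f x ^ c) =Θ[atTop] (· ^ (r * c)) :=
  (h.rpow h0 (rpow_eventually_nonneg r)).trans_eventuallyEq <|
    (eventually_ge_atTop 0).mono fun _ hx => (Real.rpow_mul hx r c).symm

theorem comp_rpow (hf : f =Θ[atTop] (· ^ r)) (hg : g =Θ[atTop] (· ^ s))
    (hgtop : Tendsto g atTop atTop) : (f ∘ g) =Θ[atTop] (· ^ (s * r)) :=
  IsTheta.trans (g := fun x => g x ^ r) ⟨hf.1.comp_tendsto hgtop, hf.2.comp_tendsto hgtop⟩
    (hg.rpow_rpow (hgtop.eventually_ge_atTop 0) r)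

theorem tendsto_zero_of_rpow (h : f =Θ[atTop] (· ^ r)) (hr : r < 0) :
    Tendsto f atTop (𝓝 0) :=
  h.tendsto_zero_iff.2 (by simpa using tendsto_rpow_neg_atTop (neg_pos.2 hr))

theorem tendsto_atTop_of_rpow (h : f =Θ[atTop] (· ^ r)) (h0 : 0 ≤ᶠ[atTop] f) (hr : 0 < r) :
    Tendsto f atTop atTop :=
  (h.tendsto_norm_atTop_iff.2 (tendsto_norm_atTop_atTop.comp (tendsto_rpow_atTop hr))).congr'
    (h0.mono fun _ hx => Real.norm_of_nonneg hx)

end Asymptotics.IsTheta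

theorem tendsto_atTop_of_hasDerivAt_comp {b g : ℝ → ℝ} (hb : Continuous b) (hpos : ∀ y, 0 < b y)
    (hg : ∀ s, HasDerivAt g (b (g s)) s) : Tendsto g atTop atTop := by
  have hmono : Monotone g := monotone_of_hasDerivAt_nonneg hg fun s => (hpos _).le
  refine tendsto_atTop_atTop_of_monotone hmono fun B => ?_
  by_contra! hB
  obtain ⟨y₀, -, hy₀⟩ :=
    isCompact_Icc.exists_isMinOn (nonempty_Icc.2 (hB 0).le) hb.continuousOn
  set m := b y₀
  have hlin : ∀ s ≥ 0, s * m ≤ g s - g 0 := fun s hs => by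
    simpa using sub_le_sub_of_hasDerivAt_le (φ := (· * m)) (fun x _ => hasDerivAt_mul_const m)
      (fun x _ => hg x) (fun x hx => hy₀ ⟨hmono hx, (hB x).le⟩) hs
  have hs : 0 ≤ (B - g 0) / m := div_nonneg (sub_nonneg.2 (hB 0).le) (hpos y₀).le
  have := hlin _ hs
  rw [div_mul_cancel₀ _ (hpos y₀).ne'] at this
  linarith [hB ((B - g 0) / m)]

theorem isTheta_rpow_of_hasDerivAt_one_div_sqrt {a g : ℝ → ℝ} {k A : ℝ} (hk : 0 < k + 2)
    (hA : 0 < A) (ha : Tendsto (fun s => a s / s ^ k) atTop (𝓝 A))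
    (hg : ∀ᶠ s in atTop, HasDerivAt g (1 / √(a (g s))) s) (hgtop : Tendsto g atTop atTop) :
    g =Θ[atTop] (· ^ (2 / (k + 2))) := by
  set c := (k + 2) / 2 with hc
  have hc0 : 0 < c := by positivity
  have hgpos : ∀ᶠ s in atTop, 0 < g s := hgtop.eventually_gt_atTop 0
  have hφ : ∀ᶠ s in atTop, HasDerivAt (fun s => g s ^ c) (c / √(a (g s) / g s ^ k)) s := by
    filter_upwards [hgpos, hg] with s hs hgs
    refine ((Real.hasDerivAt_rpow_const (p := c) (Or.inl hs.ne')).comp s hgs).congr_deriv ?_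
    rw [Real.sqrt_div' _ (Real.rpow_nonneg hs.le k), Real.sqrt_eq_rpow (g s ^ k),
      ← Real.rpow_mul hs.le, hc, show (k + 2) / 2 - 1 = k * (1 / 2) by ring, div_div_eq_mul_div]
    ring
  have hlim : Tendsto (fun s => c / √(a (g s) / g s ^ k)) atTop (𝓝 (c / √A)) :=
    tendsto_const_nhds.div (ha.comp hgtop).sqrt (Real.sqrt_pos.2 hA).ne'
  have hφ' : (fun s => c / √(a (g s) / g s ^ k)) =Θ[atTop] (· ^ (0 : ℝ)) := by
    simp only [Real.rpow_zero]
    exact (isTheta_of_div_tendsto_nhds_ne_zero (f := fun _ => (1 : ℝ)) (by simpa using hlim)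
      (div_pos hc0 (Real.sqrt_pos.2 hA)).ne').symm
  have hφΘ := isTheta_rpow_add_one_of_hasDerivAt (by norm_num) hφ
    (.of_forall fun s => div_nonneg hc0.le (Real.sqrt_nonneg _)) hφ'
  have hg_eq := hφΘ.rpow_rpow (hgpos.mono fun s hs => (Real.rpow_pos_of_pos hs c).le) c⁻¹
  refine EventuallyEq.trans_isTheta ?_ (hg_eq.trans_eventuallyEq ?_)
  · exact hgpos.mono fun s hs => (Real.rpow_rpow_inv hs.le hc0.ne').symm
  · exact .of_eq <| by rw [zero_add, one_mul, hc, inv_div]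

/-- The function `Φ` of the statement, with `H = F ∘ g`. -/
noncomputable def Phi (H : ℝ → ℝ) (u : ℝ) : ℝ :=
  √(H u) * ∫ t in Ici u, (∫ s in (0 : ℝ)..t, √(H s)) / H t ^ ((3 : ℝ) / 2)

theorem Phi_eventually_nonneg {H : ℝ → ℝ} (h0 : 0 ≤ᶠ[atTop] H) : 0 ≤ᶠ[atTop] Phi H := by
  obtain ⟨T, hT⟩ := eventually_atTop.1 h0
  filter_upwards [eventually_ge_atTop (max T 0)] with u hu
  refine mul_nonneg (Real.sqrt_nonneg _) (setIntegral_nonneg measurableSet_Ici fun t ht => ?_)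
  have ht : max T 0 ≤ t := hu.trans ht
  exact div_nonneg (intervalIntegral.integral_nonneg (le_of_max_le_right ht)
    fun _ _ => Real.sqrt_nonneg _) (Real.rpow_nonneg (hT t (le_of_max_le_left ht)) _)

theorem isTheta_Phi {H : ℝ → ℝ} {β : ℝ} (hβ : 2 < β) (hc : Continuous H)
    (h0 : 0 ≤ᶠ[atTop] H) (hΘ : H =Θ[atTop] (· ^ β)) :
    Phi H =Θ[atTop] (· ^ (2 - β / 2)) := by
  have hsqrt_c : Continuous fun x => √(H x) := hc.sqrt
  have hsqrt : (fun x => √(H x)) =Θ[atTop] (· ^ (β * (1 / 2))) := by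
    simpa only [Real.sqrt_eq_rpow] using hΘ.rpow_rpow h0 (1 / 2)
  have hI : (fun t => ∫ s in (0 : ℝ)..t, √(H s)) =Θ[atTop] (· ^ (β * (1 / 2) + 1)) :=
    isTheta_rpow_add_one_of_hasDerivAt (by linarith)
      (.of_forall fun t => (hsqrt_c.integral_hasStrictDerivAt 0 t).hasDerivAt)
      (.of_forall fun _ => Real.sqrt_nonneg _) hsqrt
  have hψ := hI.div_rpow (hΘ.rpow_rpow h0 ((3 : ℝ) / 2))
  have hψ0 : 0 ≤ᶠ[atTop] fun t => (∫ s in (0 : ℝ)..t, √(H s)) / H t ^ ((3 : ℝ) / 2) := by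
    filter_upwards [h0, eventually_ge_atTop 0] with t hHt ht
    exact div_nonneg (intervalIntegral.integral_nonneg ht fun _ _ => Real.sqrt_nonneg _)
      (Real.rpow_nonneg hHt _)
  have hψm : Measurable fun t => (∫ s in (0 : ℝ)..t, √(H s)) / H t ^ ((3 : ℝ) / 2) :=
    (intervalIntegral.continuous_primitive (fun _ _ => hsqrt_c.intervalIntegrable _ _)
      0).measurable.div (hc.measurable.pow_const _)
  exact (hsqrt.mul_rpow (isTheta_integral_Ici_rpow (by linarith) hψm hψ0 hψ)).trans_eventuallyEq
    (.of_eq <| funext fun x => congrArg (x ^ ·) (by ring))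

theorem stmt_17_general (a f g : ℝ → ℝ) (ha : ContDiff ℝ 1 a) (ν : ℝ) (hν : 0 < ν)
    (hab : ∀ s, ν ≤ a s) (hf : ContDiff ℝ 1 f)
    (hfpos : ∀ s > (0:ℝ), 0 < f s)
    (hg : ∀ s, HasDerivAt g (1 / Real.sqrt (a (g s))) s)
    (k p aInf fInf : ℝ) (hk : 0 < k) (hp : k + 1 < p)
    (haInf : 0 < aInf) (hfInf : 0 < fInf)
    (haAsym : Tendsto (fun s => a s / s ^ k) atTop (𝓝 aInf))
    (hfAsym : Tendsto (fun s => f s / s ^ p) atTop (𝓝 fInf))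
    (F : ℝ → ℝ) (hF : ∀ t, F t = ∫ τ in (0:ℝ)..t, f τ)
    (Φ : ℝ → ℝ)
    (hΦ : ∀ u, Φ u = Real.sqrt (F (g u)) *
      ∫ t in Set.Ici u,
        (∫ s in (0:ℝ)..t, Real.sqrt (F (g s))) / (F (g t)) ^ ((3:ℝ)/2)) :
    (2 * k + 3 < p → Tendsto Φ atTop (𝓝 0)) ∧
    (p < 2 * k + 3 → Tendsto Φ atTop atTop) := by
  have hsqrt_a : ∀ y, 0 < √(a y) := fun y => Real.sqrt_pos.2 (hν.trans_le (hab y))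
  have hgtop : Tendsto g atTop atTop :=
    tendsto_atTop_of_hasDerivAt_comp (b := fun y => 1 / √(a y))
      (continuous_const.div ha.continuous.sqrt fun y => (hsqrt_a y).ne')
      (fun y => one_div_pos.2 (hsqrt_a y)) hg
  have hFder : ∀ t, HasDerivAt F (f t) t := fun t =>
    funext hF ▸ (hf.continuous.integral_hasStrictDerivAt 0 t).hasDerivAt
  have hFΘ : F =Θ[atTop] (· ^ (p + 1)) :=
    isTheta_rpow_add_one_of_hasDerivAt (by linarith) (.of_forall hFder)
      ((eventually_gt_atTop 0).mono fun s hs => (hfpos s hs).le)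
      (isTheta_of_div_tendsto_nhds_ne_zero hfAsym hfInf.ne').symm
  have hHΘ := hFΘ.comp_rpow
    (isTheta_rpow_of_hasDerivAt_one_div_sqrt (by linarith) haInf haAsym (.of_forall hg) hgtop) hgtop
  have hH0 : 0 ≤ᶠ[atTop] F ∘ g := (hgtop.eventually_gt_atTop 0).mono fun t ht => by
    simpa only [Pi.zero_apply, Function.comp, hF] using
      (intervalIntegral.intervalIntegral_pos_of_pos_on (hf.continuous.intervalIntegrable _ _)
        (fun x hx => hfpos x hx.1) ht).le
  have hHc : Continuous (F ∘ g) :=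
    (continuous_iff_continuousAt.2 fun t => (hFder t).continuousAt).comp
      (continuous_iff_continuousAt.2 fun s => (hg s).continuousAt)
  have hβ : 2 / (k + 2) * (p + 1) / 2 = (p + 1) / (k + 2) := by ring
  have hΦΘ := isTheta_Phi (by rw [div_mul_eq_mul_div, lt_div_iff₀ (by linarith)]; linarith)
    hHc hH0 hHΘ
  obtain rfl : Φ = Phi (F ∘ g) := funext hΦ
  refine ⟨fun hp' => hΦΘ.tendsto_zero_of_rpow ?_,
    fun hp' => hΦΘ.tendsto_atTop_of_rpow (Phi_eventually_nonneg hH0) ?_⟩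
  · rw [hβ, sub_neg, lt_div_iff₀ (by linarith)]; linarith
  · rw [hβ, sub_pos, div_lt_iff₀ (by linarith)]; linarith

theorem stmt_17 (a f g : ℝ → ℝ) (ha : ContDiff ℝ 1 a) (ν : ℝ) (hν : 0 < ν)
    (hab : ∀ s, ν ≤ a s) (hf : ContDiff ℝ 1 f)
    (hf0 : ∀ s ≤ (0:ℝ), f s = 0) (hfpos : ∀ s > (0:ℝ), 0 < f s)
    (hg : ∀ s, HasDerivAt g (1 / Real.sqrt (a (g s))) s) (hg0 : g 0 = 0)
    (k p aInf fInf : ℝ) (hk : 0 < k) (hp : k + 1 < p)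
    (haInf : 0 < aInf) (hfInf : 0 < fInf)
    (haAsym : Tendsto (fun s => a s / s ^ k) atTop (𝓝 aInf))
    (hfAsym : Tendsto (fun s => f s / s ^ p) atTop (𝓝 fInf))
    (F : ℝ → ℝ) (hF : ∀ t, F t = ∫ τ in (0:ℝ)..t, f τ)
    (Φ : ℝ → ℝ)
    (hΦ : ∀ u, Φ u = Real.sqrt (F (g u)) *
      ∫ t in Set.Ici u,
        (∫ s in (0:ℝ)..t, Real.sqrt (F (g s))) / (F (g t)) ^ ((3:ℝ)/2)) :
    (2 * k + 3 < p → Tendsto Φ atTop (𝓝 0)) ∧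
    (p < 2 * k + 3 → Tendsto Φ atTop atTop) :=
  stmt_17_general a f g ha ν hν hab hf hfpos hg k p aInf fInf hk hp haInf hfInf haAsym hfAsym F hF Φ
    hΦ
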